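/- In the discrimination setting, for every discrimination level δ ∈ (0,1): the impartial advisor's equilibrium test allocation is τ₂*(0, δ) = 1/2 (hence the equal split (1/2, 1/2)), independently of δ; and the impartial advisor maximizes welfare among all advisors: W(0, δ) ≥ W(p, δ) for every partiality level p ∈ [0,1). -/

import Mathlib

noncomputable section

/-! Discrimination setting (Section 5.2 of the paper): `K = 2`, prior means `0`,
prior variances `Σ⁰₁ = Σ⁰₂ = 1`, budget `T = 1`.  For discrimination level
`δ ∈ (0,1)` the politician's weights are `((1+δ)/2, (1−δ)/2)`; for partiality
level `p ∈ [0,1)` the advisor's weights are `((1−p)/2, (1+p)/2)`.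

* `ah1 p δ, ah2 p δ` are the auxiliary weights `α̂₁(p,δ), α̂₂(p,δ)`.
* `tau2aux p δ` is `τ₂^aux(p,δ)` and `tau2star p δ = min{τ₂^aux(p,δ), 1}` is the
  advisor's equilibrium allocation of tests to group 2 (group 1 gets the rest).
* `omega τ₂ δ` is utilitarian welfare as a function of the allocation, and
  `W p δ = ω(τ₂*(p,δ), δ)` is equilibrium welfare.
* `Dlt τ₂ δ` is the difference of the two groups' ex ante expected utilities and
  `Ineq p δ = |Δ(τ₂*(p,δ), δ)|` is equilibrium inequality. -/

/-- Auxiliary weight `α̂₁(p,δ)`. -/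
def ah1 (p δ : ℝ) : ℝ :=
  if p < (1 - δ) / 2 then (1 / 2) * Real.sqrt ((1 + δ) * (1 - 2 * p - δ)) else 0

/-- Auxiliary weight `α̂₂(p,δ)`. -/
def ah2 (p δ : ℝ) : ℝ := (1 / 2) * Real.sqrt ((1 - δ) * (1 + 2 * p + δ))

/-- `τ₂^aux(p,δ)`. -/
def tau2aux (p δ : ℝ) : ℝ := (2 * ah2 p δ - ah1 p δ) / (ah1 p δ + ah2 p δ)

/-- The advisor's equilibrium allocation of tests to group 2, `τ₂*(p,δ)`. -/
def tau2star (p δ : ℝ) : ℝ := min (tau2aux p δ) 1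

/-- Utilitarian welfare `ω(τ₂, δ)` from splitting the budget as `(1−τ₂, τ₂)`. -/
def omega (τ2 δ : ℝ) : ℝ :=
  -3 - δ ^ 2 + ((1 + δ) ^ 2 / 2 + (1 + δ) * (1 - τ2)) / (2 - τ2)
    + ((1 - δ) ^ 2 / 2 + (1 - δ) * τ2) / (1 + τ2)

/-- Equilibrium welfare `W(p,δ)`. -/
def W (p δ : ℝ) : ℝ := omega (tau2star p δ) δ

/-- Difference `Δ(τ₂,δ)` of the two groups' ex ante expected utilities. -/
def Dlt (τ2 δ : ℝ) : ℝ :=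
  (1 + δ) * (1 - τ2) / (2 - τ2) - (1 - δ) * τ2 / (1 + τ2)

/-- Equilibrium inequality `I(p,δ)`. -/
def Ineq (p δ : ℝ) : ℝ := |Dlt (tau2star p δ) δ|

theorem omega_half_sub_omega (t δ : ℝ) (ht₂ : 2 - t ≠ 0) (ht₁ : 1 + t ≠ 0) :
    omega (1 / 2) δ - omega t δ = (1 - δ ^ 2) * (2 * t - 1) ^ 2 / (6 * ((2 - t) * (1 + t))) := by
  unfold omega
  field_simp
  ring

theorem omega_le_omega_half {t δ : ℝ} (ht : t ∈ Set.Ioo (-1 : ℝ) 2) (hδ : δ ^ 2 ≤ 1) :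
    omega t δ ≤ omega (1 / 2) δ := by
  obtain ⟨ht₁, ht₂⟩ := ht
  have hden : 0 < 6 * ((2 - t) * (1 + t)) := by nlinarith
  rw [← sub_nonneg, omega_half_sub_omega t δ (by linarith) (by linarith)]
  exact div_nonneg (mul_nonneg (by linarith) (sq_nonneg _)) hden.le

theorem ah1_nonneg (p δ : ℝ) : 0 ≤ ah1 p δ := by
  unfold ah1
  split_ifs
  · positivity
  · rfl

theorem ah2_pos {p δ : ℝ} (hp : 0 ≤ p) (hδ₁ : -1 < δ) (hδ₂ : δ < 1) : 0 < ah2 p δ := by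
  unfold ah2
  have : 0 < (1 - δ) * (1 + 2 * p + δ) := mul_pos (by linarith) (by linarith)
  positivity

-- The two radicands differ by `4 * p`.
theorem ah1_le_ah2 {p : ℝ} (hp : 0 ≤ p) (δ : ℝ) : ah1 p δ ≤ ah2 p δ := by
  unfold ah1 ah2
  split_ifs
  · gcongr 1 / 2 * √?_
    linarith
  · positivity

theorem ah1_zero_eq_ah2_zero {δ : ℝ} (hδ : δ < 1) : ah1 0 δ = ah2 0 δ := by
  rw [ah1, if_pos (by linarith), ah2]
  ring_nf

theorem tau2star_zero {δ : ℝ} (hδ₁ : -1 < δ) (hδ₂ : δ < 1) : tau2star 0 δ = 1 / 2 := by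
  have hα := ah2_pos le_rfl hδ₁ hδ₂
  have haux : tau2aux 0 δ = 1 / 2 := by
    rw [tau2aux, ah1_zero_eq_ah2_zero hδ₂]
    field_simp
    ring
  rw [tau2star, haux]
  norm_num

theorem tau2star_mem_Icc {p δ : ℝ} (hp : 0 ≤ p) (hδ₁ : -1 < δ) (hδ₂ : δ < 1) :
    tau2star p δ ∈ Set.Icc (0 : ℝ) 1 := by
  have hα₁ := ah1_nonneg p δ
  have hα₂ := ah2_pos hp hδ₁ hδ₂
  have hle := ah1_le_ah2 hp δ
  refine ⟨le_min ?_ zero_le_one, min_le_right _ _⟩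
  exact div_nonneg (by linarith) (by linarith)

/-- Lemma 1 of the paper.  For every discrimination level `δ`,
the impartial advisor (`p = 0`) chooses the equal split independent of `δ`, and
maximizes welfare among all advisors. -/
theorem stmt_10 (δ : ℝ) (hδ : δ ∈ Set.Ioo (0 : ℝ) 1) :
    tau2star 0 δ = 1 / 2 ∧ ∀ p ∈ Set.Ico (0 : ℝ) 1, W p δ ≤ W 0 δ := by
  obtain ⟨hδ₀, hδ₁⟩ := hδ
  have hstar := tau2star_zero (by linarith) hδ₁
  refine ⟨hstar, fun p hp => ?_⟩
  obtain ⟨hτ₀, hτ₁⟩ := tau2star_mem_Icc hp.1 (by linarith) hδ₁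
  rw [W, W, hstar]
  exact omega_le_omega_half ⟨by linarith, by linarith⟩ (by nlinarith)
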